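/- arXiv:1106.4778 — 4 statements merged into one kernel-verified Lean document; each statement's English description precedes it below -/
import Mathlib

section
/- Let Γ be a connected countably infinite graph. Suppose there exists a vertex α such that for all distinct vertices γ, δ with d(α,γ) = d(α,δ), there are infinitely many n ∈ ℕ with S(γ,n) ≠ S(δ,n). Then Aut(Γ) acting on the vertices of Γ has distinguishing number at most 2, i.e., there exists a set Y of vertices whose setwise stabilizer in Aut(Γ) is trivial. -/
/-!
An automorphism fixing `α` preserves distances from `α`, so it moves a vertex `v` only to some
`v' ≠ v` with `d(α, v) = d(α, v')`. There are countably many such pairs, and the Distinct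
Spheres Condition yields, for each of them, a resolving vertex `w` (one with `d(v, w) ≠ d(v', w)`)
arbitrarily far from `α`. Choosing the resolving vertices `w₀, w₁, …` with `d(α, wₖ)` increasing in
steps of at least two, and adding `α` and a neighbour `t` of `α` on a geodesic to `w₀`, gives a set
`Y` in which `{α, t}` is the only edge and `d(α, ·)` is injective. An automorphism stabilising `Y`
therefore preserves `{α, t}`; it cannot swap `α` and `t`, because `t` is closer to `w₀` than `α` is
and `w₀` is the `wₖ` nearest to `α`. So it fixes `α`, then every `wₖ`, and hence every vertex.
-/

/-- The sphere of radius `n` about `γ`. -/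
def sphere {V : Type*} (G : SimpleGraph V) (γ : V) (n : ℕ) : Set V :=
  {v | G.dist γ v = n}

open Set

theorem exists_seq_spaced_of_forall_exists_lt {ι : Type*} (f : ι → ℕ) (P : ℕ → ι → Prop)
    (h : ∀ k b, ∃ x, b < f x ∧ P k x) (b d : ℕ) :
    ∃ x : ℕ → ι, (∀ k, P k (x k)) ∧ (∀ k, b < f (x k)) ∧
      ∀ j k, j < k → f (x j) + d < f (x k) := by
  choose u hu using h
  let B : ℕ → ℕ := fun k => Nat.rec b (fun k Bk => f (u k Bk) + d) k
  have hB : ∀ k, B k < f (u k (B k)) := fun k => (hu k (B k)).1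
  have hB_succ : ∀ k, B (k + 1) = f (u k (B k)) + d := fun k => rfl
  have hb : ∀ k, b ≤ B k := by
    intro k
    induction k with
    | zero => exact le_rfl
    | succ k ih => have := hB k; rw [hB_succ]; omega
  refine ⟨fun k => u k (B k), fun k => (hu k _).2, fun k => (hb k).trans_lt (hB k), ?_⟩
  intro j k hjk
  induction k, hjk using Nat.le_induction with
  | base => have := hB (j + 1); rw [hB_succ] at this; exact this
  | succ k _ ih => have := hB (k + 1); have := hB_succ k; dsimp only at ih ⊢; omega

namespace SimpleGraph

variable {V W : Type*} {G : SimpleGraph V} {G' : SimpleGraph W}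

theorem Reachable.dist_map_le (f : G →g G') {u v : V} (h : G.Reachable u v) :
    G'.dist (f u) (f v) ≤ G.dist u v := by
  obtain ⟨p, hp⟩ := h.exists_walk_length_eq_dist
  exact (dist_le (p.map f)).trans (by rw [Walk.length_map, hp])

theorem Iso.dist_apply (φ : G ≃g G') (u v : V) : G'.dist (φ u) (φ v) = G.dist u v := by
  by_cases h : G.Reachable u v
  · refine le_antisymm (h.dist_map_le φ.toHom) ?_
    simpa using (h.map φ.toHom).dist_map_le φ.symm.toHom
  · rw [dist_eq_zero_of_not_reachable h,
      dist_eq_zero_of_not_reachable (mt Iso.reachable_iff.mp h)]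

theorem Reachable.exists_adj_dist_add_one {u v : V} (h : G.Reachable u v) (hne : u ≠ v) :
    ∃ t, G.Adj u t ∧ G.dist t v + 1 = G.dist u v := by
  obtain ⟨p, hp⟩ := h.exists_walk_length_eq_dist
  cases p with
  | nil => exact absurd rfl hne
  | @cons _ t _ hut q =>
    obtain ⟨q', hq'⟩ := q.reachable.exists_walk_length_eq_dist
    have hle : G.dist u v ≤ G.dist t v + 1 := by
      simpa [hq'] using dist_le (Walk.cons hut q')
    have hge : G.dist t v + 1 ≤ G.dist u v := by
      simpa [← hp] using dist_le q
    exact ⟨t, hut, le_antisymm hge hle⟩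

theorem exists_dist_ne_far_of_infinite (hconn : G.Connected) {γ δ : V}
    (h : {n : ℕ | sphere G γ n ≠ sphere G δ n}.Infinite) (α : V) (b : ℕ) :
    ∃ u, b < G.dist α u ∧ G.dist γ u ≠ G.dist δ u := by
  obtain ⟨n, hn, hbn⟩ := h.exists_gt (b + G.dist α γ + G.dist α δ)
  obtain ⟨u, hu⟩ := not_forall.mp (mt Set.ext hn)
  have hγ : G.dist γ u ≤ G.dist γ α + G.dist α u := hconn.dist_triangle
  have hδ : G.dist δ u ≤ G.dist δ α + G.dist α u := hconn.dist_triangle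
  rw [dist_comm (u := γ) (v := α)] at hγ
  rw [dist_comm (u := δ) (v := α)] at hδ
  change ¬(G.dist γ u = n ↔ G.dist δ u = n) at hu
  refine ⟨u, ?_, fun h => hu (by rw [h])⟩
  by_cases hγn : G.dist γ u = n <;> simp only [hγn, true_iff, false_iff, not_not] at hu <;> omega

theorem Iso.apply_eq_self_of_resolving (g : G ≃g G) {α : V} {R : Set V}
    (hR : ∀ x y, x ≠ y → G.dist α x = G.dist α y → ∃ r ∈ R, G.dist x r ≠ G.dist y r)
    (hα : g α = α) (hfix : ∀ r ∈ R, g r = r) (v : V) : g v = v := by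
  by_contra hv
  obtain ⟨r, hr, hne⟩ := hR (g v) v hv (by rw [← g.dist_apply α v, hα])
  apply hne
  calc G.dist (g v) r = G.dist (g v) (g r) := by rw [hfix r hr]
    _ = G.dist v r := g.dist_apply v r

section Stabilizer

variable {α t : V} {w : ℕ → V}

theorem eq_or_eq_pair_of_dist_close (hαt : G.Adj α t) (hfar : ∀ k, 2 < G.dist α (w k))
    (hgap : ∀ j k, j < k → G.dist α (w j) + 1 < G.dist α (w k)) {x y : V}
    (hx : x ∈ insert α (insert t (range w))) (hy : y ∈ insert α (insert t (range w)))
    (hxy : G.dist α x ≤ G.dist α y + 1) (hyx : G.dist α y ≤ G.dist α x + 1) :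
    x = y ∨ (x = α ∧ y = t) ∨ (x = t ∧ y = α) := by
  have ht : G.dist α t = 1 := dist_eq_one_iff_adj.mpr hαt
  rcases hx with rfl | rfl | ⟨j, rfl⟩ <;> rcases hy with rfl | rfl | ⟨k, rfl⟩
  · exact .inl rfl
  · exact .inr (.inl ⟨rfl, rfl⟩)
  · have := hfar k; simp only [dist_self] at hxy hyx; omega
  · exact .inr (.inr ⟨rfl, rfl⟩)
  · exact .inl rfl
  · have := hfar k; omega
  · have := hfar j; simp only [dist_self] at hxy hyx; omega
  · have := hfar j; omega
  · rcases lt_trichotomy j k with h | rfl | h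
    · have := hgap j k h; omega
    · exact .inl rfl
    · have := hgap k j h; omega

theorem Iso.apply_eq_self_of_mem_of_fix_base (hαt : G.Adj α t) (hfar : ∀ k, 2 < G.dist α (w k))
    (hgap : ∀ j k, j < k → G.dist α (w j) + 1 < G.dist α (w k)) (g : G ≃g G)
    (hg : ∀ v, v ∈ insert α (insert t (range w)) ↔ g v ∈ insert α (insert t (range w)))
    (hα : g α = α) {y : V} (hy : y ∈ insert α (insert t (range w))) : g y = y := by
  have hdist : G.dist α (g y) = G.dist α y := by rw [← g.dist_apply α y, hα]
  rcases eq_or_eq_pair_of_dist_close hαt hfar hgap ((hg y).1 hy) hy (by omega) (by omega) with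
    h | ⟨hgy, rfl⟩ | ⟨hgy, rfl⟩
  · exact h
  · rw [hgy, dist_self, dist_eq_one_iff_adj.mpr hαt] at hdist; cases hdist
  · rw [hgy, dist_self, dist_eq_one_iff_adj.mpr hαt] at hdist; cases hdist

theorem Iso.apply_base_eq_self_of_stabilizes (hαt : G.Adj α t) (hfar : ∀ k, 2 < G.dist α (w k))
    (hgap : ∀ j k, j < k → G.dist α (w j) + 1 < G.dist α (w k))
    (ht : G.dist t (w 0) + 1 = G.dist α (w 0)) (g : G ≃g G)
    (hg : ∀ v, v ∈ insert α (insert t (range w)) ↔ g v ∈ insert α (insert t (range w))) :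
    g α = α := by
  have hαY : α ∈ insert α (insert t (range w)) := mem_insert α _
  have htY : t ∈ insert α (insert t (range w)) := mem_insert_of_mem α (mem_insert t _)
  have hadj := (g.map_adj_iff).2 hαt
  have hclose := hadj.diff_dist_adj (u := α)
  rcases eq_or_eq_pair_of_dist_close hαt hfar hgap ((hg α).1 hαY) ((hg t).1 htY)
    (by omega) (by omega) with h | ⟨h, -⟩ | ⟨h, hgt⟩
  · exact absurd h hadj.ne
  · exact h
  have hd := g.dist_apply t (w 0)
  rw [hgt] at hd
  have h0 := hfar 0
  rcases (hg (w 0)).1 (mem_insert_of_mem α (mem_insert_of_mem t (mem_range_self 0))) with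
    hw | hw | ⟨j, hj⟩
  · rw [hw, dist_self] at hd; omega
  · rw [hw, dist_eq_one_iff_adj.mpr hαt] at hd; omega
  · rw [← hj] at hd
    rcases j.eq_zero_or_pos with rfl | hj0
    · omega
    · have := hgap 0 j hj0; omega

end Stabilizer

end SimpleGraph

open SimpleGraph in
theorem stmt1_general {V : Type*} [Countable V] (G : SimpleGraph V)
    (hconn : G.Connected) (α : V)
    (hDSC : ∀ γ δ : V, γ ≠ δ → G.dist α γ = G.dist α δ →
      {n : ℕ | sphere G γ n ≠ sphere G δ n}.Infinite) :
    ∃ Y : Set V, ∀ g : G ≃g G, (∀ v : V, v ∈ Y ↔ g v ∈ Y) → ∀ v : V, g v = v := by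
  by_cases hpair : ¬∃ γ δ, γ ≠ δ ∧ G.dist α γ = G.dist α δ
  · exact ⟨{α}, fun g hg => g.apply_eq_self_of_resolving (R := ∅)
      (fun x y hxy hd => (hpair ⟨x, y, hxy, hd⟩).elim) ((hg α).1 rfl) (by simp)⟩
  obtain ⟨γ, δ, hγδ⟩ := not_not.mp hpair
  have : Nonempty {p : V × V // p.1 ≠ p.2 ∧ G.dist α p.1 = G.dist α p.2} := ⟨⟨(γ, δ), hγδ⟩⟩
  obtain ⟨e, he⟩ := exists_surjective_nat {p : V × V // p.1 ≠ p.2 ∧ G.dist α p.1 = G.dist α p.2}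
  obtain ⟨w, hres, hfar, hgap⟩ := exists_seq_spaced_of_forall_exists_lt (G.dist α)
    (fun k u => G.dist (e k).1.1 u ≠ G.dist (e k).1.2 u)
    (fun k => exists_dist_ne_far_of_infinite hconn (hDSC _ _ (e k).2.1 (e k).2.2) α) 2 1
  obtain ⟨t, hαt, ht⟩ := (hconn α (w 0)).exists_adj_dist_add_one
    (fun h => absurd (hfar 0) (by simp [← h]))
  refine ⟨insert α (insert t (range w)), fun g hg => ?_⟩
  have hα := g.apply_base_eq_self_of_stabilizes hαt hfar hgap ht hg
  refine g.apply_eq_self_of_resolving (R := range w) (fun x y hxy hd => ?_) hα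
    (forall_mem_range.2 fun k => g.apply_eq_self_of_mem_of_fix_base hαt hfar hgap hg hα
      (mem_insert_of_mem α (mem_insert_of_mem t (mem_range_self k))))
  obtain ⟨k, hk⟩ := he ⟨(x, y), hxy, hd⟩
  exact ⟨w k, mem_range_self k, by simpa [hk] using hres k⟩

/-- The Distinct Spheres Lemma. -/
theorem stmt1 {V : Type*} [Countable V] [Infinite V] (G : SimpleGraph V)
    (hconn : G.Connected) (α : V)
    (hDSC : ∀ γ δ : V, γ ≠ δ → G.dist α γ = G.dist α δ →
      {n : ℕ | sphere G γ n ≠ sphere G δ n}.Infinite) :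
    ∃ Y : Set V, ∀ g : G ≃g G, (∀ v : V, v ∈ Y ↔ g v ∈ Y) → ∀ v : V, g v = v :=
  stmt1_general G hconn α hDSC
end

section
/- Let Γ be a connected graph whose automorphism group acts primitively on the vertex set, and suppose Γ has infinite diameter. Then for all distinct vertices γ, δ and all integers n ≥ 1, the spheres S(γ,n) and S(δ,n) are distinct. -/
/-- `Aut Γ` acts primitively on the vertex set: it is transitive and the only invariant
equivalence relations are equality and the universal relation. -/
def IsPrimitiveGraph {V : Type*} (G : SimpleGraph V) : Prop :=
  (∀ u v : V, ∃ g : G ≃g G, g u = v) ∧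
  ∀ r : V → V → Prop, Equivalence r →
    (∀ (g : G ≃g G) (x y : V), r x y → r (g x) (g y)) →
    (∀ x y : V, r x y → x = y) ∨ (∀ x y : V, r x y)

private lemma aut_dist_le {V : Type*} {G : SimpleGraph V} (g : G ≃g G) (x y : V) :
    G.dist (g x) (g y) ≤ G.dist x y := by
  by_cases h : G.dist x y = 0
  · rcases (SimpleGraph.dist_eq_zero_iff_eq_or_not_reachable).mp h with h | h
    · subst h; simp [SimpleGraph.dist_self]
    · rw [SimpleGraph.dist_eq_zero_of_not_reachable
        (fun hr => h (by simpa using hr.map g.symm.toHom))]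
      exact Nat.zero_le _
  · obtain ⟨p, hp⟩ := SimpleGraph.exists_walk_of_dist_ne_zero h
    calc G.dist (g x) (g y) ≤ (p.map g.toHom).length := SimpleGraph.dist_le _
    _ = p.length := SimpleGraph.Walk.length_map _ _
    _ = G.dist x y := hp

private lemma aut_dist_eq {V : Type*} {G : SimpleGraph V} (g : G ≃g G) (x y : V) :
    G.dist (g x) (g y) = G.dist x y := by
  refine le_antisymm (aut_dist_le g x y) ?_
  have := aut_dist_le g.symm (g x) (g y)
  simpa using this

private lemma walk_split {V : Type*} {G : SimpleGraph V} :
    ∀ {u w : V} (p : G.Walk u w) (n : ℕ), n ≤ p.length →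
      ∃ (x : V) (q : G.Walk u x) (r : G.Walk x w),
        q.length = n ∧ r.length = p.length - n := by
  intro u w p
  induction p with
  | nil => intro n hn; simp at hn; subst hn
           exact ⟨_, SimpleGraph.Walk.nil, SimpleGraph.Walk.nil, rfl, rfl⟩
  | @cons a b c h p ih =>
      intro n hn
      cases n with
      | zero => exact ⟨a, SimpleGraph.Walk.nil, SimpleGraph.Walk.cons h p, rfl, rfl⟩
      | succ m =>
          simp only [SimpleGraph.Walk.length_cons] at hn
          obtain ⟨x, q, r, hq, hr⟩ := ih m (by omega)
          exact ⟨x, SimpleGraph.Walk.cons h q, r, by simp [hq], by simp only [SimpleGraph.Walk.length_cons, hr]; omega⟩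

/-- In a connected primitive graph of infinite diameter, distinct vertices have distinct
spheres of every radius `n ≥ 1`. -/
theorem stmt2 {V : Type*} (G : SimpleGraph V) (hconn : G.Connected)
    (hprim : IsPrimitiveGraph G)
    (hdiam : ∀ n : ℕ, ∃ u v : V, n ≤ G.dist u v) :
    ∀ γ δ : V, γ ≠ δ → ∀ n : ℕ, 1 ≤ n → sphere G γ n ≠ sphere G δ n := by
  intro γ δ hne n hn hEq
  set r : V → V → Prop := fun x y => sphere G x n = sphere G y n with hr
  have hequiv : Equivalence r :=
    ⟨fun _ => rfl, fun h => h.symm, fun h1 h2 => h1.trans h2⟩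
  have hsphere_map : ∀ (g : G ≃g G) (x : V),
      sphere G (g x) n = (g.symm : V → V) ⁻¹' sphere G x n := by
    intro g x
    ext v
    simp only [sphere, Set.mem_setOf_eq, Set.mem_preimage]
    constructor
    · intro h
      rw [← h]
      have := aut_dist_eq g.symm (g x) v
      simpa using this
    · intro h
      rw [← h]
      have := aut_dist_eq g.symm (g x) v
      simpa using this.symm
  have hinv : ∀ (g : G ≃g G) (x y : V), r x y → r (g x) (g y) := by
    intro g x y hxy
    simp only [hr] at hxy ⊢
    rw [hsphere_map g x, hsphere_map g y, hxy]
  rcases hprim.2 r hequiv hinv with h | h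
  · exact hne (h γ δ hEq)
  · -- all spheres equal; find a vertex at distance exactly n from some vertex
    obtain ⟨u, w, huw⟩ := hdiam n
    obtain ⟨p, hp⟩ := hconn.exists_walk_length_eq_dist u w
    obtain ⟨x, q, s, hq, hs⟩ := walk_split p n (by omega)
    have hdux : G.dist u x = n := by
      have h1 : G.dist u x ≤ n := hq ▸ SimpleGraph.dist_le q
      have h2 : G.dist x w ≤ p.length - n := hs ▸ SimpleGraph.dist_le s
      have h3 : G.dist u w ≤ G.dist u x + G.dist x w := hconn.dist_triangle
      omega
    -- x ∈ sphere G u n = sphere G x n, so dist x x = n, contradiction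
    have hx : x ∈ sphere G u n := hdux
    have := h u x
    rw [this] at hx
    simp only [sphere, Set.mem_setOf_eq, SimpleGraph.dist_self] at hx
    omega
end

section
/- Let Λ and Θ be connected countably infinite graphs of infinite diameter, and let Γ = Λ □ Θ be their Cartesian product. Then for every n ∈ ℕ and all distinct vertices (λ,θ) ≠ (λ',θ') of Γ, the spheres S((λ,θ),n) and S((λ',θ'),n) in Γ are distinct. -/
namespace SimpleGraph

section Metric

variable {V : Type*} {G : SimpleGraph V}

lemma Connected.exists_dist_eq_of_le_dist (hG : G.Connected) {u v : V} {k : ℕ}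
    (hk : k ≤ G.dist u v) : ∃ m, G.dist u m = k ∧ G.dist m v = G.dist u v - k := by
  obtain ⟨w, hw⟩ := hG.exists_walk_length_eq_dist u v
  have hum : G.dist u (w.getVert k) ≤ k :=
    (dist_le (w.take k)).trans (by rw [Walk.take_length]; exact min_le_left _ _)
  have hmv : G.dist (w.getVert k) v ≤ G.dist u v - k :=
    (dist_le (w.drop k)).trans_eq (by rw [Walk.drop_length, hw])
  have := hG.dist_triangle (u := u) (v := w.getVert k) (w := v)
  exact ⟨w.getVert k, by omega, by omega⟩

lemma Connected.exists_dist_eq (hG : G.Connected)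
    (hdiam : ∀ n : ℕ, ∃ u v : V, n ≤ G.dist u v) (a : V) (n : ℕ) : ∃ v, G.dist a v = n := by
  obtain ⟨u, v, huv⟩ := hdiam (2 * n)
  have := hG.dist_triangle (u := u) (v := a) (w := v)
  rcases le_or_gt n (G.dist a v) with h | h
  · obtain ⟨m, hm, -⟩ := hG.exists_dist_eq_of_le_dist h
    exact ⟨m, hm⟩
  · obtain ⟨m, hm, -⟩ := hG.exists_dist_eq_of_le_dist (u := a) (v := u) (k := n)
      (by rw [dist_comm]; omega)
    exact ⟨m, hm⟩

lemma Connected.eq_of_sphere_dist_subset_singleton (hG : G.Connected)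
    (hdiam : ∀ n : ℕ, ∃ u v : V, n ≤ G.dist u v) {b d : V}
    (hb : sphere G b (G.dist b d) ⊆ {d}) (hd : sphere G d (G.dist b d) ⊆ {b}) : b = d := by
  by_contra hne
  have hpos := hG.pos_dist_of_ne hne
  obtain ⟨w, hw⟩ := hG.exists_dist_eq hdiam b (2 * G.dist b d)
  obtain ⟨m, hbm, hmw⟩ := hG.exists_dist_eq_of_le_dist (u := b) (v := w)
    (k := G.dist b d) (by omega)
  obtain rfl : m = d := hb hbm
  obtain rfl : w = b := hd (show G.dist m w = G.dist b m by omega)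
  rw [dist_self] at hw
  omega

end Metric

section BoxProd

variable {α β : Type*} {G : SimpleGraph α} {H : SimpleGraph β}

lemma Connected.dist_boxProd (hG : G.Connected) (hH : H.Connected) (x y : α × β) :
    (G □ H).dist x y = G.dist x.1 y.1 + H.dist x.2 y.2 := by
  rw [dist, edist_boxProd, ENat.toNat_add (edist_ne_top_iff_reachable.mpr (hG x.1 y.1))
    (edist_ne_top_iff_reachable.mpr (hH x.2 y.2))]
  rfl

lemma Connected.sphere_boxProd (hG : G.Connected) (hH : H.Connected) (x : α × β) (n : ℕ) :
    sphere (G □ H) x n = {y | G.dist x.1 y.1 + H.dist x.2 y.2 = n} := by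
  ext y
  exact Eq.congr_left (hG.dist_boxProd hH x y)

lemma Connected.sphere_boxProd_swap (hG : G.Connected) (hH : H.Connected) (x : α × β) (n : ℕ) :
    sphere (H □ G) x.swap n = Prod.swap ⁻¹' sphere (G □ H) x n := by
  ext y
  simp only [hH.sphere_boxProd hG, hG.sphere_boxProd hH, Set.mem_preimage, Set.mem_ofPred_eq,
    Prod.fst_swap, Prod.snd_swap, add_comm]

lemma Connected.sphere_dist_subset_singleton_of_sphere_boxProd_eq (hG : G.Connected)
    (hH : H.Connected) {a c : α} {b d : β} {n : ℕ}
    (hS : sphere (G □ H) (a, b) n = sphere (G □ H) (c, d) n) {u : α} (hu : G.dist c u = n) :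
    sphere H b (H.dist b d) ⊆ {d} := by
  intro w hw
  rw [hG.sphere_boxProd hH, hG.sphere_boxProd hH, Set.ext_iff] at hS
  have hud : G.dist a u + H.dist b d = n := (hS (u, d)).mpr (by simp [hu])
  have huw : G.dist c u + H.dist d w = n :=
    (hS (u, w)).mp (show G.dist a u + H.dist b w = n by rw [hw]; exact hud)
  exact (hH.dist_eq_zero_iff.mp (by omega)).symm

lemma Connected.snd_eq_of_sphere_boxProd_eq (hG : G.Connected) (hH : H.Connected)
    (hGdiam : ∀ n : ℕ, ∃ u v : α, n ≤ G.dist u v)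
    (hHdiam : ∀ n : ℕ, ∃ u v : β, n ≤ H.dist u v)
    {x y : α × β} {n : ℕ} (hS : sphere (G □ H) x n = sphere (G □ H) y n) : x.2 = y.2 := by
  obtain ⟨u, hu⟩ := hG.exists_dist_eq hGdiam y.1 n
  obtain ⟨u', hu'⟩ := hG.exists_dist_eq hGdiam x.1 n
  refine hH.eq_of_sphere_dist_subset_singleton hHdiam
    (hG.sphere_dist_subset_singleton_of_sphere_boxProd_eq hH hS hu) ?_
  rw [dist_comm]
  exact hG.sphere_dist_subset_singleton_of_sphere_boxProd_eq hH hS.symm hu'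

end BoxProd

end SimpleGraph

open SimpleGraph

theorem stmt9_general {α β : Type*}
    (Λ : SimpleGraph α) (Θ : SimpleGraph β)
    (hΛ : Λ.Connected) (hΘ : Θ.Connected)
    (hΛdiam : ∀ n : ℕ, ∃ u v : α, n ≤ Λ.dist u v)
    (hΘdiam : ∀ n : ℕ, ∃ u v : β, n ≤ Θ.dist u v) :
    ∀ (n : ℕ) (x y : α × β), x ≠ y →
      sphere (Λ.boxProd Θ) x n ≠ sphere (Λ.boxProd Θ) y n := by
  intro n x y hne hS
  have hS' : sphere (Θ □ Λ) x.swap n = sphere (Θ □ Λ) y.swap n := by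
    rw [hΛ.sphere_boxProd_swap hΘ, hΛ.sphere_boxProd_swap hΘ, hS]
  exact hne (Prod.ext (hΘ.snd_eq_of_sphere_boxProd_eq hΛ hΘdiam hΛdiam hS')
    (hΛ.snd_eq_of_sphere_boxProd_eq hΘ hΛdiam hΘdiam hS))

/-- In the Cartesian product of two connected denumerable graphs of infinite diameter,
distinct vertices have distinct spheres of every radius. -/
theorem stmt9 {α β : Type*} [Countable α] [Infinite α] [Countable β] [Infinite β]
    (Λ : SimpleGraph α) (Θ : SimpleGraph β)
    (hΛ : Λ.Connected) (hΘ : Θ.Connected)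
    (hΛdiam : ∀ n : ℕ, ∃ u v : α, n ≤ Λ.dist u v)
    (hΘdiam : ∀ n : ℕ, ∃ u v : β, n ≤ Θ.dist u v) :
    ∀ (n : ℕ) (x y : α × β), x ≠ y →
      sphere (Λ.boxProd Θ) x n ≠ sphere (Λ.boxProd Θ) y n :=
  stmt9_general Λ Θ hΛ hΘ hΛdiam hΘdiam
end

section
/- Let G be an infinite primitive permutation group on a countably infinite set V with all suborbits finite. Then G has distinguishing number 2, i.e., there exists a subset Y of V whose setwise stabilizer in G is trivial. -/
/-!
Fix `a ≠ b` and let `Γ` be the orbital graph of `{a, b}`: primitivity makes it connected, finite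
suborbits make it locally finite, and `G` acts on it by isometries. For distinct `x, y` there are
infinitely many `v` with `d(x, v) ≠ d(y, v)`: "only finitely many such `v`" is a `G`-invariant
equivalence relation, which by primitivity is trivial, since it is not universal (`V \ {a}` is
covered by the finitely many sets `{v | d(a, v) ≠ d(w, v)}`, `w` a neighbour of `a`). Running
through all pairs `(x, y)`, one colours the finite spheres `S_k(x)`, `S_k(y)` step by step, using
a still uncoloured `v` with `d(x, v) = k ≠ d(y, v)` to make `|S_k(x) ∩ Y| ≠ |S_k(y) ∩ Y|`. Since
`g` maps `S_k(x) ∩ Y` onto `S_k(g x) ∩ Y` when `g • Y = Y`, such a `g` fixes every point.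
-/

open Pointwise

def IsPrimitiveAction (G V : Type*) [Group G] [MulAction G V] : Prop :=
  (∀ u v : V, ∃ g : G, g • u = v) ∧
  ∀ r : V → V → Prop, Equivalence r →
    (∀ (g : G) (x y : V), r x y → r (g • x) (g • y)) →
    (∀ x y : V, r x y → x = y) ∨ (∀ x y : V, r x y)

namespace SimpleGraph

variable {V W : Type*} {Γ : SimpleGraph V} {Δ : SimpleGraph W}

lemma Hom.edist_le (f : Γ →g Δ) (u v : V) : Δ.edist (f u) (f v) ≤ Γ.edist u v := by
  by_cases hr : Γ.Reachable u v
  · obtain ⟨p, hp⟩ := hr.exists_walk_length_eq_edist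
    rw [← hp, ← Walk.length_map f p]
    exact SimpleGraph.edist_le _
  · rw [edist_eq_top_of_not_reachable hr]
    exact le_top

lemma Iso.dist_eq (f : Γ ≃g Δ) (u v : V) : Δ.dist (f u) (f v) = Γ.dist u v := by
  have h : Γ.edist (f.symm (f u)) (f.symm (f v)) ≤ Δ.edist (f u) (f v) :=
    Hom.edist_le f.symm.toHom _ _
  rw [RelIso.symm_apply_apply, RelIso.symm_apply_apply] at h
  exact congrArg ENat.toNat (le_antisymm (Hom.edist_le f.toHom u v) h)

lemma finite_setOf_edist_le (hΓ : ∀ v, (Γ.neighborSet v).Finite) (n : ℕ) (x : V) :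
    {v | Γ.edist x v ≤ n}.Finite := by
  induction n generalizing x with
  | zero => simp [edist_eq_zero_iff]
  | succ n ih =>
    refine (((hΓ x).biUnion fun w _ => ih w).insert x).subset
      fun v (hv : Γ.edist x v ≤ (n + 1 : ℕ)) => ?_
    rcases eq_or_ne x v with rfl | hne
    · exact Set.mem_insert _ _
    have hreach : Γ.Reachable x v :=
      reachable_of_edist_ne_top (hv.trans_lt (ENat.natCast_lt_top _)).ne
    obtain ⟨p, hp⟩ := hreach.exists_walk_length_eq_edist
    obtain ⟨w, hxw, q, rfl⟩ := p.exists_eq_cons_of_ne hne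
    have hq : q.length ≤ n := by
      rw [← hp, Walk.length_cons] at hv
      exact Nat.le_of_succ_le_succ (by exact_mod_cast hv)
    exact Set.mem_insert_of_mem _ (Set.mem_biUnion hxw ((edist_le q).trans (by exact_mod_cast hq)))

lemma Preconnected.finite_setOf_dist_eq (hconn : Γ.Preconnected)
    (hΓ : ∀ v, (Γ.neighborSet v).Finite) (x : V) (k : ℕ) : {v | Γ.dist x v = k}.Finite :=
  (finite_setOf_edist_le hΓ k x).subset fun v hv => by
    rw [Set.mem_ofPred_eq, ← (hconn x v).coe_dist_eq_edist, hv]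

lemma Reachable.exists_adj_dist_lt {a v : V} (h : Γ.Reachable a v) (hne : a ≠ v) :
    ∃ w, Γ.Adj a w ∧ Γ.dist w v < Γ.dist a v := by
  obtain ⟨p, hp⟩ := h.exists_walk_length_eq_dist
  obtain ⟨w, haw, q, rfl⟩ := p.exists_eq_cons_of_ne hne
  refine ⟨w, haw, (dist_le q).trans_lt ?_⟩
  rw [← hp, Walk.length_cons]
  exact Nat.lt_succ_self _

lemma Preconnected.exists_adj_infinite_setOf_dist_ne [Infinite V] (hconn : Γ.Preconnected)
    {a : V} (ha : (Γ.neighborSet a).Finite) :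
    ∃ w, Γ.Adj a w ∧ {v | Γ.dist a v ≠ Γ.dist w v}.Infinite := by
  by_contra! hfin
  refine Set.infinite_univ (((ha.biUnion fun w hw => hfin w hw).insert a).subset fun v _ => ?_)
  rcases eq_or_ne a v with rfl | hne
  · exact Set.mem_insert _ _
  obtain ⟨w, haw, hlt⟩ := (hconn a v).exists_adj_dist_lt hne
  exact Set.mem_insert_of_mem _ (Set.mem_biUnion haw hlt.ne')

end SimpleGraph

namespace IsPrimitiveAction

variable {G V : Type*} [Group G] [MulAction G V]

lemma preconnected (hprim : IsPrimitiveAction G V) {Γ : SimpleGraph V}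
    (hΓ : ∀ (g : G) u v, Γ.Adj u v → Γ.Adj (g • u) (g • v)) {a b : V} (hab : Γ.Adj a b) :
    Γ.Preconnected := by
  exact (hprim.2 Γ.Reachable ⟨.refl, .symm, .trans⟩ fun g u v h => h.map ⟨(g • ·), hΓ g _ _⟩)
    |>.resolve_left fun h => hab.ne (h a b hab.reachable)

lemma infinite_setOf_ne (hprim : IsPrimitiveAction G V) {ι : Type*} {d : V → V → ι}
    (hd : ∀ (g : G) x v, d (g • x) (g • v) = d x v) (hinf : ∃ x y, {v | d x v ≠ d y v}.Infinite)
    {x y : V} (hxy : x ≠ y) : {v | d x v ≠ d y v}.Infinite := by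
  let r x y := {v | d x v ≠ d y v}.Finite
  have hr : Equivalence r :=
    { refl _ := Set.finite_empty.subset fun _ hv => hv rfl
      symm h := h.subset fun _ hv => Ne.symm hv
      trans hxy hyz := (hxy.union hyz).subset fun v (hv : d _ v ≠ d _ v) =>
        (em (d _ v = d _ v)).elim (fun h => .inr fun h' => hv (h.trans h')) .inl }
  have hinv (g : G) (x y : V) (h : r x y) : r (g • x) (g • y) :=
    (h.image (g • ·)).subset fun v hv => ⟨g⁻¹ • v,
      by rwa [Set.mem_ofPred_eq, ← hd g x, ← hd g y, smul_inv_smul], smul_inv_smul g v⟩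
  obtain htriv | hall := hprim.2 r hr hinv
  · exact fun hfin => hxy (htriv x y hfin)
  · obtain ⟨x', y', hinf⟩ := hinf
    exact (hinf (hall x' y')).elim

end IsPrimitiveAction

section OrbitalGraph

open MulAction

variable {G V : Type*} [Group G] [MulAction G V]

lemma finite_setOf_mk_mem_orbit {a b : V} (hsub : (orbit (stabilizer G a) b).Finite) (x : V) :
    {v | (x, v) ∈ orbit G (a, b)}.Finite := by
  rcases Set.eq_empty_or_nonempty {v | (x, v) ∈ orbit G (a, b)} with h | ⟨_, g₀, hg₀⟩
  · simp [h]
  refine (hsub.image (g₀ • ·)).subset ?_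
  rintro v ⟨g, hg⟩
  simp only [Prod.smul_mk, Prod.mk.injEq] at hg₀ hg
  refine ⟨(g₀⁻¹ * g) • b, ⟨⟨g₀⁻¹ * g, ?_⟩, rfl⟩, ?_⟩
  · rw [mem_stabilizer_iff, mul_smul, hg.1, ← hg₀.1, inv_smul_smul]
  · simp [mul_smul, hg.2]

variable (G) in
def orbitalGraph (a b : V) : SimpleGraph V :=
  SimpleGraph.fromRel fun u v => (u, v) ∈ orbit G (a, b)

lemma orbitalGraph_adj {a b : V} (hab : a ≠ b) : (orbitalGraph G a b).Adj a b :=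
  (SimpleGraph.fromRel_adj _ _ _).2 ⟨hab, .inl (mem_orbit_self _)⟩

lemma orbitalGraph_adj_smul_iff {a b u v : V} (g : G) :
    (orbitalGraph G a b).Adj (g • u) (g • v) ↔ (orbitalGraph G a b).Adj u v := by
  simp only [orbitalGraph, SimpleGraph.fromRel_adj, ne_eq, smul_left_cancel_iff, ← Prod.smul_mk,
    ← orbit_eq_iff, orbit_smul]

def orbitalGraph.smulIso (a b : V) (g : G) : orbitalGraph G a b ≃g orbitalGraph G a b :=
  ⟨toPerm g, orbitalGraph_adj_smul_iff g⟩

lemma finite_neighborSet_orbitalGraph (hsub : ∀ α β : V, (orbit (stabilizer G α) β).Finite)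
    (a b x : V) : ((orbitalGraph G a b).neighborSet x).Finite := by
  refine ((finite_setOf_mk_mem_orbit (hsub a b) x).union
    (finite_setOf_mk_mem_orbit (hsub b a) x)).subset ?_
  rintro v ⟨-, h | ⟨g, hg⟩⟩
  · exact .inl h
  · exact .inr ⟨g, by simpa [and_comm] using hg⟩

end OrbitalGraph

structure PartialColouring (V : Type*) where
  decided : Set V
  chosen : Set V
  finite_decided : decided.Finite
  chosen_subset : chosen ⊆ decided

namespace PartialColouring

variable {V : Type*}

instance : Preorder (PartialColouring V) where
  le c c' := c.decided ⊆ c'.decided ∧ c'.chosen ∩ c.decided = c.chosen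
  le_refl c := ⟨subset_rfl, Set.inter_eq_left.2 c.chosen_subset⟩
  le_trans c c' c'' h h' := ⟨h.1.trans h'.1, by
    rw [← h.2, ← h'.2, Set.inter_assoc, Set.inter_eq_right.2 h.1]⟩

lemma chosen_subset_of_le {c c' : PartialColouring V} (h : c ≤ c') : c.chosen ⊆ c'.chosen := by
  rw [← h.2]
  exact Set.inter_subset_left

lemma inter_iUnion_chosen {c : ℕ → PartialColouring V} (hc : Monotone c) {s : Set V} {n : ℕ}
    (hs : s ⊆ (c n).decided) : s ∩ ⋃ m, (c m).chosen = s ∩ (c n).chosen := by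
  have : (⋃ m, (c m).chosen) ∩ (c n).decided = (c n).chosen := by
    refine subset_antisymm ?_ fun v hv => ⟨Set.mem_iUnion.2 ⟨n, hv⟩, (c n).chosen_subset hv⟩
    rintro v ⟨hv, hvn⟩
    obtain ⟨m, hm⟩ := Set.mem_iUnion.1 hv
    rcases le_total m n with hmn | hnm
    · exact chosen_subset_of_le (hc hmn) hm
    · exact (hc hnm).2 ▸ ⟨hm, hvn⟩
  rw [← this, Set.inter_comm _ (c n).decided, ← Set.inter_assoc, Set.inter_eq_left.2 hs]

variable {α ι : Type*} {S : α → ι → Set V}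

lemma exists_le_ncard_inter_chosen_ne (hS : ∀ x k, (S x k).Finite) (c : PartialColouring V)
    {x y : α} (hxy : {v | ∃ k, v ∈ S x k ∧ v ∉ S y k}.Infinite) :
    ∃ c' ≥ c, ∃ k, S x k ⊆ c'.decided ∧ S y k ⊆ c'.decided ∧
      (S x k ∩ c'.chosen).ncard ≠ (S y k ∩ c'.chosen).ncard := by
  obtain ⟨v, ⟨k, hvx, hvy⟩, hvc⟩ := (hxy.sdiff c.finite_decided).nonempty
  have hD := c.finite_decided.union ((hS x k).union (hS y k))
  have hSD : S x k ∪ S y k ⊆ c.decided ∪ (S x k ∪ S y k) := Set.subset_union_right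
  by_cases heq : (S x k ∩ c.chosen).ncard = (S y k ∩ c.chosen).ncard
  · -- colouring the new point `v` changes the count in `S x k` only
    refine ⟨⟨_, insert v c.chosen, hD, Set.insert_subset (hSD (.inl hvx))
      (c.chosen_subset.trans Set.subset_union_left)⟩,
      ⟨Set.subset_union_left, by rw [Set.insert_inter_of_notMem hvc,
        Set.inter_eq_left.2 c.chosen_subset]⟩,
      k, Set.subset_union_left.trans hSD, Set.subset_union_right.trans hSD, ?_⟩
    rw [Set.inter_insert_of_mem hvx, Set.inter_insert_of_notMem hvy,
      Set.ncard_insert_of_notMem (fun h => hvc (c.chosen_subset h.2)) ((hS x k).inter_of_left _),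
      heq]
    exact Nat.succ_ne_self _
  · exact ⟨⟨_, c.chosen, hD, c.chosen_subset.trans Set.subset_union_left⟩,
      ⟨Set.subset_union_left, Set.inter_eq_left.2 c.chosen_subset⟩,
      k, Set.subset_union_left.trans hSD, Set.subset_union_right.trans hSD, heq⟩

end PartialColouring

open PartialColouring in
theorem exists_set_ncard_inter_ne {V α ι : Type*} [Countable α] {S : α → ι → Set V}
    (hS : ∀ x k, (S x k).Finite)
    (hsep : ∀ x y, x ≠ y → {v | ∃ k, v ∈ S x k ∧ v ∉ S y k}.Infinite) :
    ∃ Y : Set V, ∀ x y, x ≠ y → ∃ k, (S x k ∩ Y).ncard ≠ (S y k ∩ Y).ncard := by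
  cases isEmpty_or_nonempty α
  · exact ⟨∅, fun x => isEmptyElim x⟩
  obtain ⟨e, he⟩ := exists_surjective_nat (α × α)
  have step (c : PartialColouring V) (p : α × α) : ∃ c' ≥ c, p.1 ≠ p.2 → ∃ k,
      S p.1 k ⊆ c'.decided ∧ S p.2 k ⊆ c'.decided ∧
        (S p.1 k ∩ c'.chosen).ncard ≠ (S p.2 k ∩ c'.chosen).ncard := by
    by_cases hp : p.1 = p.2
    · exact ⟨c, le_rfl, fun h => (h hp).elim⟩
    · obtain ⟨c', hc', h⟩ := exists_le_ncard_inter_chosen_ne hS c (hsep _ _ hp)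
      exact ⟨c', hc', fun _ => h⟩
  choose next le_next ncard_next_ne using step
  let c (n : ℕ) : PartialColouring V :=
    n.rec ⟨∅, ∅, Set.finite_empty, subset_rfl⟩ fun n c => next c (e n)
  have hc : Monotone c := monotone_nat_of_le_succ fun n => le_next _ _
  have hsep_at (n : ℕ) (hn : (e n).1 ≠ (e n).2) : ∃ k,
      (S (e n).1 k ∩ ⋃ m, (c m).chosen).ncard ≠ (S (e n).2 k ∩ ⋃ m, (c m).chosen).ncard := by
    obtain ⟨k, hx, hy, hk⟩ := ncard_next_ne (c n) (e n) hn
    refine ⟨k, ?_⟩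
    rwa [inter_iUnion_chosen hc (n := n + 1) hx, inter_iUnion_chosen hc (n := n + 1) hy]
  refine ⟨⋃ n, (c n).chosen, fun x y hxy => ?_⟩
  obtain ⟨n, hn⟩ := he (x, y)
  simpa only [hn] using hsep_at n (by simpa only [hn] using hxy)

lemma smul_eq_self_of_ncard_inter_ne {G V ι : Type*} [Group G] [MulAction G V] {d : V → V → ι}
    (hd : ∀ (g : G) x v, d (g • x) (g • v) = d x v) {Y : Set V}
    (hY : ∀ x y, x ≠ y → ∃ k, ({v | d x v = k} ∩ Y).ncard ≠ ({v | d y v = k} ∩ Y).ncard)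
    {g : G} (hg : g • Y = Y) (x : V) : g • x = x := by
  by_contra hx
  obtain ⟨k, hk⟩ := hY _ _ hx
  have hsphere : {v | d (g • x) v = k} = g • {v | d x v = k} := by
    ext v
    rw [Set.mem_smul_set_iff_inv_smul_mem, Set.mem_ofPred_eq, Set.mem_ofPred_eq,
      ← hd g x (g⁻¹ • v), smul_inv_smul]
  apply hk
  rw [hsphere, ← Set.ncard_smul_set g ({v | d x v = k} ∩ Y), Set.smul_set_inter, hg]

theorem stmt16_general {G V : Type*} [Group G] [MulAction G V] [FaithfulSMul G V]
    [Countable V] [Infinite V]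
    (hprim : IsPrimitiveAction G V)
    (hsub : ∀ α β : V, (MulAction.orbit (MulAction.stabilizer G α) β).Finite) :
    ∃ Y : Set V, ∀ g : G, g • Y = Y → g = 1 := by
  obtain ⟨a, b, hab⟩ := exists_pair_ne V
  let Γ := orbitalGraph G a b
  have hloc := finite_neighborSet_orbitalGraph hsub a b
  have hconn : Γ.Preconnected :=
    hprim.preconnected (fun g _ _ => (orbitalGraph_adj_smul_iff g).2) (orbitalGraph_adj hab)
  have hdist (g : G) (x v : V) : Γ.dist (g • x) (g • v) = Γ.dist x v :=
    (orbitalGraph.smulIso a b g).dist_eq x v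
  have hsep (x y : V) (hxy : x ≠ y) : {v | ∃ k, Γ.dist x v = k ∧ Γ.dist y v ≠ k}.Infinite := by
    obtain ⟨w, -, hw⟩ := hconn.exists_adj_infinite_setOf_dist_ne (hloc a)
    simpa only [exists_eq_left', ne_comm] using hprim.infinite_setOf_ne hdist ⟨a, w, hw⟩ hxy
  obtain ⟨Y, hY⟩ := exists_set_ncard_inter_ne (hconn.finite_setOf_dist_eq hloc) hsep
  exact ⟨Y, fun g hg => eq_of_smul_eq_smul fun x =>
    (smul_eq_self_of_ncard_inter_ne hdist hY hg x).trans (one_smul G x).symm⟩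

/-- An infinite primitive permutation group on a countably infinite set with all
suborbits finite has distinguishing number 2: some subset has trivial setwise
stabilizer. -/
theorem stmt16 {G V : Type*} [Group G] [MulAction G V] [FaithfulSMul G V]
    [Infinite G] [Countable V] [Infinite V]
    (hprim : IsPrimitiveAction G V)
    (hsub : ∀ α β : V, (MulAction.orbit (MulAction.stabilizer G α) β).Finite) :
    ∃ Y : Set V, ∀ g : G, g • Y = Y → g = 1 :=
  stmt16_general hprim hsub
end
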